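/- Let α₀ ∈ ℝ∖{0} and ω > 0. Let θ ∈ (0,ω) be such that log(i(θ + ωn)) + 4πβ₀ ≠ 0 for all n ∈ ℤ, and set p = iθ. Then every ξ = (ξₙ)_{n∈ℤ} ∈ ℓ²(ℤ;ℂ) satisfying ξₙ = −α₀ h(p + iωn)(ξ_{n+1} − ξ_{n−1}) for every n ∈ ℤ is identically zero. -/

import Mathlib

/-!
Write `D n := log (i(θ + ωn)) + 4πβ₀`, so that the equation reads
`D n · ξ n = -2πiα₀ (ξ (n+1) - ξ (n-1))`. Pairing with `ξ`, the right-hand side becomes real,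
because the central difference is skew-adjoint on `ℓ²(ℤ)`; hence `∑ Im (D n) |ξ n|² = 0`.
As `Im (4πβ₀) = -π/2`, `Im (D n)` is `0` for `n ≥ 0` and `-π` for `n < 0`, so `ξ` vanishes on
the negative integers. The recurrence, whose coefficient `-α₀ h` never vanishes, then
propagates this to all of `ℤ`.
-/

open MeasureTheory

/-- `β₀ := (γ - log 2)/(2π) - i/8`, with `γ` the Euler–Mascheroni constant. -/
noncomputable def beta0 : ℂ :=
  (((Real.eulerMascheroniConstant - Real.log 2) / (2 * Real.pi) : ℝ) : ℂ) - Complex.I / 8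

/-- `h(z) := 2πi / (log z + 4πβ₀)`, with the principal branch of the complex logarithm. -/
noncomputable def hfun (z : ℂ) : ℂ :=
  2 * (Real.pi : ℂ) * Complex.I / (Complex.log z + 4 * (Real.pi : ℂ) * beta0)

open Complex ComplexConjugate
open scoped Real

lemma Memℓp.summable_norm_sq {ι E : Type*} [NormedAddCommGroup E] {ξ : ι → E}
    (hξ : Memℓp ξ 2) :
    Summable fun n => ‖ξ n‖ ^ 2 := by
  simpa using hξ.summable (by norm_num)

lemma summable_mul_of_summable_norm_sq {ι R : Type*} [NormedRing R] [CompleteSpace R]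
    {f g : ι → R} (hf : Summable fun i => ‖f i‖ ^ 2) (hg : Summable fun i => ‖g i‖ ^ 2) :
    Summable fun i => f i * g i :=
  .of_norm_bounded ((hf.add hg).div_const 2) fun i => by
    nlinarith [norm_mul_le (f i) (g i), sq_nonneg (‖f i‖ - ‖g i‖)]

lemma hasSum_re_central_diff_mul_conj {ξ : ℤ → ℂ} (hξ : Summable fun n => ‖ξ n‖ ^ 2) :
    HasSum (fun n => ((ξ (n + 1) - ξ (n - 1)) * conj (ξ n)).re) 0 := by
  have hconj : Summable fun n => ‖conj (ξ n)‖ ^ 2 := by simpa using hξ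
  have hξ_fwd : Summable fun n => ‖ξ (n + 1)‖ ^ 2 := hξ.comp_injective (add_left_injective 1)
  have hξ_bwd : Summable fun n => ‖ξ (n - 1)‖ ^ 2 :=
    hξ.comp_injective (sub_left_injective (b := 1))
  have hfwd := summable_mul_of_summable_norm_sq hξ_fwd hconj
  have hbwd := summable_mul_of_summable_norm_sq hξ_bwd hconj
  have hbwd_eq : ∑' n, ξ (n - 1) * conj (ξ n) = conj (∑' n, ξ (n + 1) * conj (ξ n)) := by
    rw [conj_tsum, ← (Equiv.addRight (1 : ℤ)).tsum_eq]
    refine tsum_congr fun n => ?_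
    rw [Equiv.coe_addRight, add_sub_cancel_right, map_mul, conj_conj, mul_comm]
  have h : HasSum (fun n => (ξ (n + 1) - ξ (n - 1)) * conj (ξ n))
      (∑' n, ξ (n + 1) * conj (ξ n) - ∑' n, ξ (n - 1) * conj (ξ n)) := by
    simpa only [sub_mul] using hfwd.hasSum.sub hbwd.hasSum
  simpa [hbwd_eq] using hasSum_re h

lemma hasSum_im_mul_norm_sq_eq_zero {ξ d : ℤ → ℂ} (hξ : Summable fun n => ‖ξ n‖ ^ 2) (r : ℝ)
    (h : ∀ n, d n * ξ n = r * I * (ξ (n + 1) - ξ (n - 1))) :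
    HasSum (fun n => (d n).im * ‖ξ n‖ ^ 2) 0 := by
  have key : ∀ n, (d n).im * ‖ξ n‖ ^ 2 = r * ((ξ (n + 1) - ξ (n - 1)) * conj (ξ n)).re := by
    intro n
    have h' := congrArg (fun z => (z * conj (ξ n)).im) (h n)
    simpa only [mul_assoc, mul_conj', ← ofReal_pow, im_mul_ofReal, im_ofReal_mul, I_mul_im]
      using h'
  simpa only [key, mul_zero] using (hasSum_re_central_diff_mul_conj hξ).mul_left r

lemma eq_zero_of_hasSum_mul_norm_sq_eq_zero {ι E : Type*} [NormedAddCommGroup E]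
    {c : ι → ℝ} {ξ : ι → E} (h : HasSum (fun i => c i * ‖ξ i‖ ^ 2) 0) (hc : ∀ i, c i ≤ 0)
    {i : ι} (hi : c i < 0) : ξ i = 0 := by
  have hnonneg : ∀ j, 0 ≤ -(c j * ‖ξ j‖ ^ 2) := fun j =>
    neg_nonneg.mpr (mul_nonpos_of_nonpos_of_nonneg (hc j) (sq_nonneg _))
  have hterm : -(c i * ‖ξ i‖ ^ 2) = 0 :=
    congrFun ((hasSum_zero_iff_of_nonneg hnonneg).mp (by simpa using h.neg)) i
  simpa [hi.ne] using hterm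

lemma eq_zero_of_forall_neg_of_step {M : Type*} [Zero M] {ξ : ℤ → M}
    (hneg : ∀ n < 0, ξ n = 0) (hstep : ∀ n, ξ (n - 1) = 0 → ξ n = 0 → ξ (n + 1) = 0) :
    ∀ n, ξ n = 0 := by
  have hpair : ∀ n, -1 ≤ n → ξ (n - 1) = 0 ∧ ξ n = 0 := by
    refine Int.leInduction ⟨hneg _ (by norm_num), hneg _ (by norm_num)⟩ fun n _ ih => ?_
    exact ⟨by simpa using ih.2, hstep n ih.1 ih.2⟩
  intro n
  rcases lt_or_ge n 0 with hn | hn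
  · exact hneg n hn
  · exact (hpair n (by omega)).2

lemma im_four_pi_mul_beta0 : (4 * (π : ℂ) * beta0).im = -(π / 2) := by
  have hβ : beta0.im = -(1 / 8) := by simp [beta0, -ofReal_div]
  simp [mul_im, hβ]
  ring

lemma im_log_I_mul_add_four_pi_mul_beta0_of_pos {t : ℝ} (ht : 0 < t) :
    (log (I * t) + 4 * π * beta0).im = 0 := by
  rw [add_im, log_im, im_four_pi_mul_beta0, arg_eq_pi_div_two_iff.mpr ⟨by simp, by simpa⟩]
  ring

lemma im_log_I_mul_add_four_pi_mul_beta0_of_neg {t : ℝ} (ht : t < 0) :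
    (log (I * t) + 4 * π * beta0).im = -π := by
  rw [add_im, log_im, im_four_pi_mul_beta0, arg_eq_neg_pi_div_two_iff.mpr ⟨by simp, by simpa⟩]
  ring

lemma im_log_I_mul_add_four_pi_mul_beta0_eq_ite {θ ω : ℝ} (hθ : θ ∈ Set.Ioo 0 ω) (n : ℤ) :
    (log (I * ((θ + ω * n : ℝ) : ℂ)) + 4 * π * beta0).im = if n < 0 then -π else 0 := by
  obtain ⟨hθ₀, hθω⟩ := hθ
  split_ifs with hn
  · have hn' : (n : ℝ) ≤ -1 := by exact_mod_cast Int.le_sub_one_of_lt hn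
    exact im_log_I_mul_add_four_pi_mul_beta0_of_neg (by nlinarith)
  · have hn' : (0 : ℝ) ≤ n := by exact_mod_cast not_lt.mp hn
    exact im_log_I_mul_add_four_pi_mul_beta0_of_pos (by nlinarith)

lemma log_add_four_pi_mul_beta0_mul_hfun {z : ℂ} (hz : log z + 4 * π * beta0 ≠ 0) :
    (log z + 4 * π * beta0) * hfun z = 2 * π * I :=
  mul_div_cancel₀ _ hz

lemma log_add_four_pi_mul_beta0_mul_eq {z x y : ℂ} {a : ℝ} (hz : log z + 4 * π * beta0 ≠ 0)
    (h : x = -a * hfun z * y) :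
    (log z + 4 * π * beta0) * x = ((-(2 * π * a) : ℝ) : ℂ) * I * y := by
  rw [h, ofReal_neg, ofReal_mul, ofReal_mul, ofReal_ofNat]
  linear_combination (-a * y) * log_add_four_pi_mul_beta0_mul_hfun hz

lemma hfun_ne_zero {z : ℂ} (hz : log z + 4 * π * beta0 ≠ 0) : hfun z ≠ 0 :=
  div_ne_zero (by simp [Real.pi_ne_zero]) hz

theorem homogeneous_eq_only_trivial_solution_on_imaginary_axis (α₀ ω θ : ℝ)
    (hα : α₀ ≠ 0) (hθ : θ ∈ Set.Ioo 0 ω)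
    (hlog : ∀ n : ℤ,
      Complex.log (Complex.I * ((θ : ℂ) + (ω : ℂ) * (n : ℂ))) + 4 * (Real.pi : ℂ) * beta0 ≠ 0)
    (ξ : ℤ → ℂ) (hξ2 : Memℓp ξ 2)
    (heq : ∀ n : ℤ, ξ n =
      -(α₀ : ℂ) * hfun (Complex.I * (θ : ℂ) + Complex.I * (ω : ℂ) * (n : ℂ)) *
        (ξ (n + 1) - ξ (n - 1))) :
    ∀ n : ℤ, ξ n = 0 := by
  have harg : ∀ n : ℤ, I * θ + I * ω * n = I * ((θ + ω * n : ℝ) : ℂ) := fun n => by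
    push_cast; ring
  simp only [harg] at heq
  have hlog' : ∀ n : ℤ, log (I * ((θ + ω * n : ℝ) : ℂ)) + 4 * π * beta0 ≠ 0 := fun n => by
    simpa using hlog n
  have hsum := hasSum_im_mul_norm_sq_eq_zero hξ2.summable_norm_sq _
    fun n => log_add_four_pi_mul_beta0_mul_eq (hlog' n) (heq n)
  have him := im_log_I_mul_add_four_pi_mul_beta0_eq_ite hθ
  have hneg : ∀ n < 0, ξ n = 0 := fun n hn =>
    eq_zero_of_hasSum_mul_norm_sq_eq_zero hsum
      (fun m => by rw [him]; split_ifs <;> linarith [Real.pi_pos])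
      (by rw [him, if_pos hn]; linarith [Real.pi_pos])
  refine eq_zero_of_forall_neg_of_step hneg fun n hprev hcur => ?_
  have h := heq n
  rw [hprev, hcur, sub_zero, eq_comm, mul_eq_zero] at h
  exact h.resolve_left
    (mul_ne_zero (by exact_mod_cast neg_ne_zero.mpr hα) (hfun_ne_zero (hlog' n)))
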